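/- arXiv:1601.00767 — 2 statements merged into one kernel-verified Lean document; each statement's English description precedes it below -/
import Mathlib

section
/- Assume (H_Ψ): Ψ : H → ℝ ∪ {+∞} is a closed convex proper function with inf_H Ψ = 0 and C = argmin Ψ ≠ ∅; and (H_Φ): Φ : H → ℝ ∪ {+∞} is a closed convex proper function with inf_C Φ = 0 and S = argmin_C Φ ≠ ∅. Define ω(ε) = inf_{x∈H} (Ψ(x) + εΦ(x)). Then: (a) for every ε ≥ 0, |ω(ε)| ≤ inf_{p∈H} [Ψ*(εp) + εΦ*(−p)]; (b) if ε > 0, ω(ε) > −∞, and there exists x₀ ∈ dom Ψ such that Φ is continuous at x₀, then equality holds and the infimum is attained: |ω(ε)| = min_{p∈H} [Ψ*(εp) + εΦ*(−p)]; (c) if there exists x₀ ∈ C at which Φ is continuous, then there exist x̄ ∈ S and p ∈ N_C(x̄) such that, for every ε ≥ 0, |ω(ε)| ≤ Ψ*(εp) − σ_C(εp). -/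
open MeasureTheory Set Filter Topology ENNReal RealInnerProductSpace

variable {H : Type*} [NormedAddCommGroup H] [InnerProductSpace ℝ H] [CompleteSpace H]

/-- A multivalued operator `M : H ⇉ H`, identified with its graph, is monotone. -/
def MonotoneGraph (M : Set (H × H)) : Prop :=
  ∀ p ∈ M, ∀ q ∈ M, (0:ℝ) ≤ ⟪p.1 - q.1, p.2 - q.2⟫

/-- Maximal monotone operator: the graph is not strictly contained in a monotone graph. -/
def MaximalMonotoneGraph (M : Set (H × H)) : Prop :=
  MonotoneGraph M ∧ ∀ N : Set (H × H), MonotoneGraph N → M ⊆ N → N = M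

/-- The Brézis–Haraux function `G_M(x,u) = sup_{(y,v) ∈ gph M} ⟨x−y, v−u⟩`. -/
noncomputable def BH (M : Set (H × H)) (x u : H) : EReal :=
  ⨆ q ∈ M, ((⟪x - q.1, q.2 - u⟫ : ℝ) : EReal)

/-- Value of an extended real in `ℝ≥0∞` (used to express `∫ < +∞` for nonnegative quantities). -/
noncomputable def ennval (x : EReal) : ℝ≥0∞ :=
  if x = ⊤ then ⊤ else ENNReal.ofReal x.toReal

/-- `x` is locally absolutely continuous on `[0,∞)` with derivative `x'`. -/
def LocAC (x x' : ℝ → H) : Prop :=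
  (∀ T : ℝ, IntegrableOn x' (Icc 0 T)) ∧
    ∀ t : ℝ, 0 ≤ t → x t = x 0 + ∫ s in (0:ℝ)..t, x' s

/-- Weak convergence in average of the trajectory `x` to `xlim`. -/
def WeakAvgConv (x : ℝ → H) (xlim : H) : Prop :=
  ∀ y : H, Tendsto (fun t : ℝ => (⟪t⁻¹ • ∫ s in (0:ℝ)..t, x s, y⟫ : ℝ))
    atTop (𝓝 (⟪xlim, y⟫ : ℝ))

/-- Weak convergence of `x(t)` to `xlim` as `t → +∞`. -/
def WeakConv (x : ℝ → H) (xlim : H) : Prop :=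
  ∀ y : H, Tendsto (fun t : ℝ => (⟪x t, y⟫ : ℝ)) atTop (𝓝 (⟪xlim, y⟫ : ℝ))

/-- Convexity for `ℝ ∪ {+∞}`-valued (here `EReal`-valued) functions. -/
def EConvex {E : Type*} [AddCommGroup E] [Module ℝ E] (f : E → EReal) : Prop :=
  ∀ x y : E, ∀ a b : ℝ, 0 ≤ a → 0 ≤ b → a + b = 1 →
    f (a • x + b • y) ≤ (a : EReal) * f x + (b : EReal) * f y

/-- Subdifferential of an extended-real-valued convex function. -/
def ESubdiff (f : H → EReal) (x : H) : Set H :=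
  {p : H | ∀ y : H, f x + ((⟪p, y - x⟫ : ℝ) : EReal) ≤ f y}

/-- Graph of the subdifferential operator. -/
def ESubdiffGraph (f : H → EReal) : Set (H × H) :=
  {q : H × H | q.2 ∈ ESubdiff f q.1}

/-- Graph of the sum of two operators. -/
def GraphSum (A B : Set (H × H)) : Set (H × H) :=
  {q : H × H | ∃ u v : H, (q.1, u) ∈ A ∧ (q.1, v) ∈ B ∧ q.2 = u + v}

/-- Graph of `A + c • B`. -/
def ScaledSum (A B : Set (H × H)) (c : ℝ) : Set (H × H) :=
  {q : H × H | ∃ u v : H, (q.1, u) ∈ A ∧ (q.1, v) ∈ B ∧ q.2 = u + c • v}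

/-- Graph of `c • A`. -/
def SmulGraph (c : ℝ) (A : Set (H × H)) : Set (H × H) :=
  {q : H × H | ∃ u : H, (q.1, u) ∈ A ∧ q.2 = c • u}

/-- Domain of an operator given by its graph. -/
def GraphDom (A : Set (H × H)) : Set H := {x : H | ∃ u : H, (x, u) ∈ A}

/-- Graph of the normal cone operator of a set `C`. -/
def NormalConeGraph (C : Set H) : Set (H × H) :=
  {q : H × H | q.1 ∈ C ∧ ∀ y ∈ C, (⟪q.2, y - q.1⟫ : ℝ) ≤ 0}

/-- Lower semicontinuous hull of an extended-real-valued function. -/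
noncomputable def lscHull {E : Type*} [TopologicalSpace E] (f : E → EReal) : E → EReal :=
  fun x => Filter.liminf f (𝓝 x)

/-- Inf-compactness: bounded sublevel sets are relatively compact. -/
def InfCompact (f : H → EReal) : Prop :=
  ∀ R : ℝ, 0 < R → ∀ l : ℝ, IsCompact (closure {x : H | ‖x‖ ≤ R ∧ f x ≤ (l : EReal)})

/-- Set of global minimizers of `f`. -/
def ArgMin (f : H → EReal) : Set H := {x : H | ∀ y : H, f x ≤ f y}

/-- Set of minimizers of `f` over the set `C`. -/
def ArgMinOn (f : H → EReal) (C : Set H) : Set H := {x ∈ C | ∀ y ∈ C, f x ≤ f y}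

/-- Fenchel conjugate of an extended-real-valued function. -/
noncomputable def FConj (f : H → EReal) (p : H) : EReal :=
  ⨆ x : H, (((⟪p, x⟫ : ℝ) : EReal) - f x)

/-- Support function of a set `C`. -/
noncomputable def SuppFn (C : Set H) (p : H) : EReal :=
  ⨆ x : C, ((⟪p, (x : H)⟫ : ℝ) : EReal)

/-!
Weak duality (a) is the Fenchel–Young inequality for `Ψ` and `εΦ`, combined with the scaling rule
`(εΦ)^*(εp) = εΦ^*(p)`. For (b), `εΦ` is bounded above near `x₀`, so its epigraph has nonempty
interior, and this interior is disjoint from the hypograph of `ω(ε) - Ψ`. A Hahn–Banach hyperplane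
separating them is non-vertical because `x₀ ∈ dom Ψ`, and its slope is a dual solution of value
`-ω(ε)`. For (c), the same Fenchel duality applied to `δ_C + Φ`, whose infimum is `0`, yields a dual
solution `p`; optimality of `x̄ ∈ S` forces `p ∈ N_C(x̄)` and `Φ^*(-p) ≤ -⟨p, x̄⟩`, while
`σ_C(εp) = ε⟨p, x̄⟩`, so (a) at this `p` gives the bound.
-/

section Extended

variable {α : Type*}

theorem ArgMin_eq_setOf_le_iInf (f : α → EReal) : ArgMin f = {x | f x ≤ ⨅ y, f y} := by
  ext x
  simp [ArgMin, le_iInf_iff]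

open Classical in
/-- The indicator `δ_C` of convex analysis, `+∞` off `C` (unlike `Set.indicator`). -/
noncomputable def EIndicator (C : Set α) (x : α) : EReal := if x ∈ C then 0 else ⊤

theorem EIndicator_of_mem {C : Set α} {x : α} (hx : x ∈ C) : EIndicator C x = 0 := if_pos hx

theorem EIndicator_of_not_mem {C : Set α} {x : α} (hx : x ∉ C) : EIndicator C x = ⊤ := if_neg hx

theorem EIndicator_nonneg (C : Set α) (x : α) : 0 ≤ EIndicator C x := by
  by_cases hx : x ∈ C <;> simp [EIndicator_of_mem, EIndicator_of_not_mem, hx]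

end Extended

section Convexity

variable {V : Type*} [AddCommGroup V] [Module ℝ V]

theorem EReal.coe_mul_ne_bot {e : ℝ} (he : 0 ≤ e) {a : EReal} (ha : a ≠ ⊥) :
    (e : EReal) * a ≠ ⊥ :=
  (EReal.mul_ne_bot _ _).2
    ⟨.inl (EReal.coe_ne_bot e), .inr ha, .inl (EReal.coe_ne_top e), .inl (EReal.coe_nonneg.2 he)⟩

theorem EConvex.const_mul {f : V → EReal} (hf : EConvex f) {e : ℝ} (he : 0 ≤ e) :
    EConvex fun x => (e : EReal) * f x := by
  intro x y a b ha hb hab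
  have he' : (0 : EReal) ≤ e := EReal.coe_nonneg.2 he
  calc (e : EReal) * f (a • x + b • y) ≤ e * (a * f x + b * f y) :=
        mul_le_mul_of_nonneg_left (hf x y a b ha hb hab) he'
    _ = a * (e * f x) + b * (e * f y) := by
        rw [EReal.left_distrib_of_nonneg_of_ne_top he' (EReal.coe_ne_top e), mul_left_comm,
          mul_left_comm (e : EReal)]

theorem EConvex.convex_epigraph {f : V → EReal} (hf : EConvex f) :
    Convex ℝ {z : V × ℝ | f z.1 ≤ z.2} := by
  rintro ⟨x, s⟩ hx ⟨y, t⟩ hy a b ha hb hab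
  calc f (a • x + b • y) ≤ a * f x + b * f y := hf x y a b ha hb hab
    _ ≤ a * s + b * t := add_le_add (mul_le_mul_of_nonneg_left hx (EReal.coe_nonneg.2 ha))
        (mul_le_mul_of_nonneg_left hy (EReal.coe_nonneg.2 hb))
    _ = ((a * s + b * t : ℝ) : EReal) := by norm_cast

theorem EConvex.convex_sublevel {f : V → EReal} (hf : EConvex f) (v : ℝ) :
    Convex ℝ {x | f x ≤ v} := by
  intro x hx y hy a b ha hb hab
  calc f (a • x + b • y) ≤ a * f x + b * f y := hf x y a b ha hb hab
    _ ≤ a * v + b * v := add_le_add (mul_le_mul_of_nonneg_left hx (EReal.coe_nonneg.2 ha))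
        (mul_le_mul_of_nonneg_left hy (EReal.coe_nonneg.2 hb))
    _ = v := by norm_cast; rw [← add_mul, hab, one_mul]

theorem Convex.econvex_EIndicator {C : Set V} (hC : Convex ℝ C) : EConvex (EIndicator C) := by
  intro x y a b ha hb hab
  have hnonneg : ∀ (c : ℝ) (z : V), 0 ≤ c → 0 ≤ (c : EReal) * EIndicator C z :=
    fun c z hc => mul_nonneg (EReal.coe_nonneg.2 hc) (EIndicator_nonneg C z)
  by_cases hxy : a • x + b • y ∈ C
  · rw [EIndicator_of_mem hxy]
    exact add_nonneg (hnonneg a x ha) (hnonneg b y hb)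
  rw [EIndicator_of_not_mem hxy, top_le_iff]
  rcases ha.eq_or_lt with rfl | ha
  · obtain rfl : b = 1 := by simpa using hab
    simp_all [EIndicator_of_not_mem]
  rcases hb.eq_or_lt with rfl | hb
  · obtain rfl : a = 1 := by simpa using hab
    simp_all [EIndicator_of_not_mem]
  by_cases hx : x ∈ C
  · have hy : y ∉ C := fun hy => hxy (hC hx hy ha.le hb.le hab)
    rw [EIndicator_of_not_mem hy, EReal.coe_mul_top_of_pos hb]
    exact EReal.add_top_of_ne_bot (ne_bot_of_le_ne_bot EReal.zero_ne_bot (hnonneg a x ha.le))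
  · rw [EIndicator_of_not_mem hx, EReal.coe_mul_top_of_pos ha]
    exact EReal.top_add_of_ne_bot (ne_bot_of_le_ne_bot EReal.zero_ne_bot (hnonneg b y hb.le))

end Convexity

section Conjugate

variable {E : Type*} [NormedAddCommGroup E] [InnerProductSpace ℝ E]

theorem FConj_le_coe {f : E → EReal} (hf : ∀ x, f x ≠ ⊥) {p : E} {c : ℝ}
    (h : ∀ x (t : ℝ), f x ≤ t → ⟪p, x⟫ - t ≤ c) : FConj f p ≤ c := by
  refine iSup_le fun x => ?_
  induction hx : f x using EReal.rec with
  | bot => exact absurd hx (hf x)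
  | coe t => exact_mod_cast h x t hx.le
  | top => simp

theorem inner_sub_le_FConj (f : E → EReal) (p x : E) : ⟪p, x⟫ - f x ≤ FConj f p :=
  le_iSup (fun x => ((⟪p, x⟫ : ℝ) : EReal) - f x) x

theorem FConj_EIndicator (C : Set E) (p : E) : FConj (EIndicator C) p = SuppFn C p := by
  refine le_antisymm (iSup_le fun x => ?_) (iSup_le fun x => le_iSup_of_le (x : E) ?_)
  · by_cases hx : x ∈ C
    · rw [EIndicator_of_mem hx, sub_zero]
      exact le_iSup (fun y : C => ((⟪p, (y : E)⟫ : ℝ) : EReal)) ⟨x, hx⟩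
    · simp [EIndicator_of_not_mem hx]
  · rw [EIndicator_of_mem x.2, sub_zero]

theorem SuppFn_eq_of_forall_inner_sub_nonpos {C : Set E} {xbar p : E} (hxbar : xbar ∈ C)
    (hp : ∀ y ∈ C, ⟪p, y - xbar⟫ ≤ 0) : SuppFn C p = ⟪p, xbar⟫ := by
  refine le_antisymm (iSup_le fun y => ?_) (le_iSup_of_le ⟨xbar, hxbar⟩ le_rfl)
  have := hp y y.2
  rw [inner_sub_right] at this
  exact EReal.coe_le_coe_iff.2 (by linarith)

theorem FConj_const_mul_smul_le (f : E → EReal) {e : ℝ} (he : 0 ≤ e) (p : E) :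
    FConj (fun x => (e : EReal) * f x) (e • p) ≤ e * FConj f p := by
  refine iSup_le fun x => ?_
  calc ((⟪e • p, x⟫ : ℝ) : EReal) - e * f x = e * (((⟪p, x⟫ : ℝ) : EReal) - f x) := by
        rw [EReal.mul_sub_of_nonneg_of_ne_top (EReal.coe_nonneg.2 he) (EReal.coe_ne_top e),
          real_inner_smul_left, EReal.coe_mul]
    _ ≤ e * FConj f p :=
        mul_le_mul_of_nonneg_left (inner_sub_le_FConj f p x) (EReal.coe_nonneg.2 he)

theorem FConj_const_mul_smul (f : E → EReal) {e : ℝ} (he : 0 < e) (p : E) :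
    FConj (fun x => (e : EReal) * f x) (e • p) = e * FConj f p := by
  refine le_antisymm (FConj_const_mul_smul_le f he.le p) ?_
  have hcancel : ∀ a : EReal, ((e⁻¹ : ℝ) : EReal) * (e * a) = a := fun a => by
    rw [← mul_assoc, ← EReal.coe_mul, inv_mul_cancel₀ he.ne', EReal.coe_one, one_mul]
  have h := FConj_const_mul_smul_le (fun x => (e : EReal) * f x) (inv_nonneg.2 he.le) (e • p)
  simp only [hcancel, inv_smul_smul₀ he.ne'] at h
  calc (e : EReal) * FConj f p
      ≤ e * (((e⁻¹ : ℝ) : EReal) * FConj (fun x => (e : EReal) * f x) (e • p)) :=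
        mul_le_mul_of_nonneg_left h (EReal.coe_nonneg.2 he.le)
    _ = FConj (fun x => (e : EReal) * f x) (e • p) := by
        rw [← mul_assoc, ← EReal.coe_mul, mul_inv_cancel₀ he.ne', EReal.coe_one, one_mul]

theorem neg_add_le_FConj_add_FConj_neg {f g : E → EReal} {x : E} (hf : f x ≠ ⊥) (hg : g x ≠ ⊥)
    (q : E) : -(f x + g x) ≤ FConj f q + FConj g (-q) := by
  calc -(f x + g x) = (((⟪q, x⟫ : ℝ) : EReal) - f x) + (((⟪-q, x⟫ : ℝ) : EReal) - g x) := by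
        rw [inner_neg_left]
        generalize f x = a at hf
        generalize g x = b at hg
        induction a using EReal.rec <;> induction b using EReal.rec <;> simp_all
        norm_cast
        ring
    _ ≤ FConj f q + FConj g (-q) :=
        add_le_add (inner_sub_le_FConj f q x) (inner_sub_le_FConj g (-q) x)

theorem neg_iInf_add_const_mul_le {Ψ Φ : E → EReal} (hΨ : ∀ x, Ψ x ≠ ⊥) (hΦ : ∀ x, Φ x ≠ ⊥)
    {e : ℝ} (he : 0 ≤ e) (p : E) :
    -(⨅ x, Ψ x + e * Φ x) ≤ FConj Ψ (e • p) + e * FConj Φ (-p) := by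
  refine EReal.neg_le.2 (le_iInf fun x => EReal.neg_le.1 ?_)
  calc -(Ψ x + e * Φ x) ≤ FConj Ψ (e • p) + FConj (fun y => (e : EReal) * Φ y) (e • -p) := by
        simpa only [smul_neg] using neg_add_le_FConj_add_FConj_neg (g := fun y => e * Φ y)
          (hΨ x) (EReal.coe_mul_ne_bot he (hΦ x)) (e • p)
    _ ≤ FConj Ψ (e • p) + e * FConj Φ (-p) := add_le_add le_rfl (FConj_const_mul_smul_le Φ he _)

theorem forall_inner_sub_nonpos_of_FConj_neg_add_SuppFn_nonpos {Φ : E → EReal} {C : Set E}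
    {xbar p : E} (hxbar : xbar ∈ C) (hΦ : Φ xbar = 0) (h : FConj Φ (-p) + SuppFn C p ≤ 0) :
    (∀ y ∈ C, ⟪p, y - xbar⟫ ≤ 0) ∧ FConj Φ (-p) ≤ ((-⟪p, xbar⟫ : ℝ) : EReal) := by
  have hxbar' : ((-⟪p, xbar⟫ : ℝ) : EReal) ≤ FConj Φ (-p) := by
    simpa [hΦ, inner_neg_left] using inner_sub_le_FConj Φ (-p) xbar
  have hC : ∀ y ∈ C, ((⟪p, y⟫ : ℝ) : EReal) ≤ SuppFn C p :=
    fun y hy => le_iSup (fun y : C => ((⟪p, (y : E)⟫ : ℝ) : EReal)) ⟨y, hy⟩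
  refine ⟨fun y hy => ?_, ?_⟩
  · have := (add_le_add hxbar' (hC y hy)).trans h
    rw [← EReal.coe_add, ← EReal.coe_zero, EReal.coe_le_coe_iff] at this
    rw [inner_sub_right]
    linarith
  · have := (add_le_add le_rfl (hC xbar hxbar)).trans h
    rwa [← EReal.le_sub_iff_add_le (.inl (EReal.coe_ne_bot _)) (.inl (EReal.coe_ne_top _)),
      zero_sub, ← EReal.coe_neg] at this

end Conjugate

section Separation

variable {E : Type*} [NormedAddCommGroup E] [InnerProductSpace ℝ E]

theorem lt_of_mem_interior_epigraph {X : Type*} [TopologicalSpace X] {f : X → EReal} {x : X}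
    {t : ℝ} (h : (x, t) ∈ interior {z : X × ℝ | f z.1 ≤ z.2}) : f x < t := by
  have hev : ∀ᶠ s in 𝓝 t, (x, s) ∈ interior {z : X × ℝ | f z.1 ≤ z.2} :=
    (Continuous.prodMk_right x).continuousAt.preimage_mem_nhds (isOpen_interior.mem_nhds h)
  obtain ⟨s, hs, hst⟩ :=
    ((hev.filter_mono nhdsWithin_le_nhds).and (self_mem_nhdsWithin (s := Iio t))).exists
  have hfs : (x, s) ∈ {z : X × ℝ | f z.1 ≤ z.2} := interior_subset hs
  exact hfs.trans_lt (EReal.coe_lt_coe_iff.2 hst)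

/-- The separating hyperplane is non-vertical because it separates two points on the same
vertical line. -/
theorem exists_inner_sub_separation [CompleteSpace E] {A B : Set (E × ℝ)} (hA : Convex ℝ A)
    (hB : Convex ℝ B) (hAB : Disjoint (interior A) B) {x₀ : E} {t₀ t₁ : ℝ}
    (h₀ : (x₀, t₀) ∈ interior A) (h₁ : (x₀, t₁) ∈ B) (ht : t₁ < t₀) :
    ∃ (q : E) (c : ℝ), (∀ z ∈ A, ⟪q, z.1⟫ - z.2 ≤ c) ∧ ∀ z ∈ B, c ≤ ⟪q, z.1⟫ - z.2 := by
  obtain ⟨L, u, hLA, hLB⟩ := geometric_hahn_banach_open hA.interior isOpen_interior hB hAB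
  have hLA' : ∀ z ∈ A, L z ≤ u := by
    have hcl : closure A ⊆ {z | L z ≤ u} := by
      rw [← hA.closure_interior_eq_closure_of_nonempty_interior ⟨_, h₀⟩]
      exact closure_minimal (fun z hz => (hLA z hz).le) (isClosed_le L.continuous continuous_const)
    exact fun z hz => hcl (subset_closure hz)
  set q₀ := (InnerProductSpace.toDual ℝ E).symm (L.comp (ContinuousLinearMap.inl ℝ E ℝ))
  set s := L (0, 1)
  have hL : ∀ z : E × ℝ, L z = ⟪q₀, z.1⟫ + z.2 * s := by
    rintro ⟨x, t⟩
    have hxt : (x, t) = ContinuousLinearMap.inl ℝ E ℝ x + t • ((0 : E), (1 : ℝ)) := by simp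
    rw [hxt, map_add, map_smul, smul_eq_mul, InnerProductSpace.toDual_symm_apply]
    simp [s]
  have hs : s < 0 := by
    have := (hLA _ h₀).trans_le (hLB _ h₁)
    rw [hL, hL] at this
    nlinarith
  have hscale : ∀ z : E × ℝ, ⟪(-s)⁻¹ • q₀, z.1⟫ - z.2 = L z / -s := fun z => by
    have hs0 : s ≠ 0 := hs.ne
    rw [hL, real_inner_smul_left]
    field_simp
    ring
  refine ⟨(-s)⁻¹ • q₀, u / -s, fun z hz => ?_, fun z hz => ?_⟩
  · rw [hscale]
    exact div_le_div_of_nonneg_right (hLA' z hz) (by linarith)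
  · rw [hscale]
    exact div_le_div_of_nonneg_right (hLB z hz) (by linarith)

end Separation

theorem exists_eventually_le_of_continuousAt {X : Type*} [TopologicalSpace X] {f : X → EReal}
    {x₀ : X} (hf : ContinuousAt f x₀) (hfx₀ : f x₀ ≠ ⊤) : ∃ M : ℝ, ∀ᶠ x in 𝓝 x₀, f x ≤ M := by
  obtain ⟨M, hM, -⟩ := EReal.lt_iff_exists_real_btwn.1 (lt_top_iff_ne_top.2 hfx₀)
  exact ⟨M, (hf.eventually (eventually_lt_nhds hM)).mono fun _ h => h.le⟩

section Duality

variable {E : Type*} [NormedAddCommGroup E] [InnerProductSpace ℝ E] [CompleteSpace E]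

/-- Fenchel–Rockafellar duality. The interior of the epigraph of `g`, nonempty by the bound near
`x₀`, is separated from the hypograph of `m - f`. -/
theorem exists_FConj_add_FConj_neg_le {f g : E → EReal} (hf : EConvex f) (hg : EConvex g)
    {x₀ : E} (hfx₀ : f x₀ ≠ ⊤) {M : ℝ} (hgM : ∀ᶠ x in 𝓝 x₀, g x ≤ M) {m : ℝ}
    (hm : ∀ x, (m : EReal) ≤ f x + g x) :
    ∃ q : E, FConj g q + FConj f (-q) ≤ ((-m : ℝ) : EReal) := by
  have hfb : ∀ x, f x ≠ ⊥ := fun x hx => by simpa [hx] using hm x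
  have hgb : ∀ x, g x ≠ ⊥ := fun x hx => by simpa [hx] using hm x
  set A := {z : E × ℝ | g z.1 ≤ z.2}
  set B := {z : E × ℝ | f z.1 ≤ ((m - z.2 : ℝ) : EReal)}
  have hB : Convex ℝ B := by
    intro z hz w hw a b ha hb hab
    have h : f (a • z.1 + b • w.1) ≤ ((a * (m - z.2) + b * (m - w.2) : ℝ) : EReal) :=
      hf.convex_epigraph (x := (z.1, m - z.2)) (y := (w.1, m - w.2)) hz hw ha hb hab
    show f (a • z.1 + b • w.1) ≤ ((m - (a * z.2 + b * w.2) : ℝ) : EReal)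
    convert h using 3
    linear_combination -m * hab
  have hAB : Disjoint (interior A) B := by
    refine Set.disjoint_left.2 fun z hzA hzB => (hm z.1).not_gt ?_
    calc f z.1 + g z.1 ≤ ((m - z.2 : ℝ) : EReal) + g z.1 := add_le_add hzB le_rfl
      _ < ((m - z.2 : ℝ) : EReal) + z.2 :=
          EReal.add_lt_add_left_coe (lt_of_mem_interior_epigraph hzA) _
      _ = m := by norm_cast; ring
  obtain ⟨r, hr⟩ : ∃ r : ℝ, f x₀ = r := ⟨_, (EReal.coe_toReal hfx₀ (hfb x₀)).symm⟩
  have h₀ : (x₀, max M (m - r) + 1) ∈ interior A := by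
    rw [mem_interior_iff_mem_nhds, nhds_prod_eq]
    filter_upwards [hgM.prod_mk (eventually_gt_nhds (by linarith [le_max_left M (m - r)] :
      M < max M (m - r) + 1))] with z hz
    exact hz.1.trans (EReal.coe_le_coe_iff.2 hz.2.le)
  have h₁ : (x₀, m - r) ∈ B := by
    show f x₀ ≤ ((m - (m - r) : ℝ) : EReal)
    rw [show m - (m - r) = r by ring, hr]
  obtain ⟨q, c, hqA, hqB⟩ := exists_inner_sub_separation hg.convex_epigraph hB hAB h₀ h₁
    (by linarith [le_max_right M (m - r)])
  have hgq : FConj g q ≤ c := FConj_le_coe hgb fun x t ht => hqA (x, t) ht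
  have hfq : FConj f (-q) ≤ ((-c - m : ℝ) : EReal) := FConj_le_coe hfb fun x t ht => by
    have := hqB (x, m - t)
      (show f x ≤ ((m - (m - t) : ℝ) : EReal) by rwa [show m - (m - t) = t by ring])
    rw [inner_neg_left]
    linarith
  refine ⟨q, (add_le_add hgq hfq).trans_eq ?_⟩
  norm_cast
  ring

theorem exists_neg_iInf_add_const_mul_eq {Ψ Φ : E → EReal} (hΨ : EConvex Ψ) (hΦ : EConvex Φ)
    (hΨb : ∀ x, Ψ x ≠ ⊥) (hΦb : ∀ x, Φ x ≠ ⊥) {e : ℝ} (he : 0 < e)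
    (hbot : (⨅ x, Ψ x + e * Φ x) ≠ ⊥) (htop : (⨅ x, Ψ x + e * Φ x) ≠ ⊤)
    {x₀ : E} (hΨx₀ : Ψ x₀ ≠ ⊤) {M : ℝ} (hΦM : ∀ᶠ x in 𝓝 x₀, Φ x ≤ M) :
    ∃ p : E, -(⨅ x, Ψ x + e * Φ x) = FConj Ψ (e • p) + e * FConj Φ (-p) := by
  obtain ⟨m, hm⟩ : ∃ m : ℝ, (⨅ x, Ψ x + e * Φ x) = m := ⟨_, (EReal.coe_toReal htop hbot).symm⟩
  have heM : ∀ᶠ x in 𝓝 x₀, (e : EReal) * Φ x ≤ ((e * M : ℝ) : EReal) := hΦM.mono fun x hx => by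
    rw [EReal.coe_mul]
    exact mul_le_mul_of_nonneg_left hx (EReal.coe_nonneg.2 he.le)
  obtain ⟨q, hq⟩ := exists_FConj_add_FConj_neg_le hΨ (hΦ.const_mul he.le) hΨx₀ heM
    fun x => hm ▸ iInf_le _ x
  refine ⟨-(e⁻¹ • q), le_antisymm (neg_iInf_add_const_mul_le hΨb hΦb he.le _) ?_⟩
  rw [smul_neg, smul_inv_smul₀ he.ne', neg_neg, ← FConj_const_mul_smul Φ he,
    smul_inv_smul₀ he.ne', add_comm, hm, ← EReal.coe_neg]
  exact hq

theorem exists_forall_inner_sub_nonpos_and_const_mul_FConj_neg_le {Φ : E → EReal} {C : Set E}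
    (hC : Convex ℝ C) (hΦ : EConvex Φ) (hΦb : ∀ x, Φ x ≠ ⊥) (hΦC : ∀ x ∈ C, 0 ≤ Φ x)
    {xbar : E} (hxbar : xbar ∈ C) (hΦxbar : Φ xbar = 0) {x₀ : E} (hx₀ : x₀ ∈ C) {M : ℝ}
    (hΦM : ∀ᶠ x in 𝓝 x₀, Φ x ≤ M) :
    ∃ p : E, (∀ y ∈ C, ⟪p, y - xbar⟫ ≤ 0) ∧
      ∀ e : ℝ, 0 ≤ e → e * FConj Φ (-p) ≤ -SuppFn C (e • p) := by
  have hδΦ : ∀ x, ((0 : ℝ) : EReal) ≤ EIndicator C x + Φ x := fun x => by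
    by_cases hx : x ∈ C
    · simpa [EIndicator_of_mem hx] using hΦC x hx
    · simp [EIndicator_of_not_mem hx, EReal.top_add_of_ne_bot (hΦb x)]
  obtain ⟨q, hq⟩ := exists_FConj_add_FConj_neg_le hC.econvex_EIndicator hΦ
    (by simp [EIndicator_of_mem hx₀]) hΦM hδΦ
  rw [FConj_EIndicator, neg_zero, EReal.coe_zero] at hq
  obtain ⟨hnormal, hΦq⟩ := forall_inner_sub_nonpos_of_FConj_neg_add_SuppFn_nonpos (p := -q)
    hxbar hΦxbar (by rwa [neg_neg])
  refine ⟨-q, hnormal, fun e he => ?_⟩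
  rw [SuppFn_eq_of_forall_inner_sub_nonpos hxbar fun y hy => by
    rw [real_inner_smul_left]; exact mul_nonpos_of_nonneg_of_nonpos he (hnormal y hy)]
  refine (mul_le_mul_of_nonneg_left hΦq (EReal.coe_nonneg.2 he)).trans_eq ?_
  rw [← EReal.coe_mul, ← EReal.coe_neg, real_inner_smul_left, mul_neg]

end Duality

theorem omega_duality_estimates_general
    (Ψ Φ : H → EReal)
    (hΨconv : EConvex Ψ)
    (hΨproper : (∀ x : H, Ψ x ≠ ⊥) ∧ ∃ x : H, Ψ x ≠ ⊤)
    (hΨinf : (⨅ y : H, Ψ y) = (0 : EReal))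
    (hΦconv : EConvex Φ)
    (hΦproper : (∀ x : H, Φ x ≠ ⊥) ∧ ∃ x : H, Φ x ≠ ⊤)
    (hΦinf : (⨅ y : ArgMin Ψ, Φ (y : H)) = (0 : EReal))
    (hSne : (ArgMinOn Φ (ArgMin Ψ)).Nonempty)
    (omg : ℝ → EReal) (homg : ∀ e : ℝ, omg e = ⨅ y : H, (Ψ y + (e : EReal) * Φ y)) :
    -- (a)
    (∀ e : ℝ, 0 ≤ e →
      -omg e ≤ ⨅ p : H, (FConj Ψ (e • p) + (e : EReal) * FConj Φ (-p))) ∧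
    -- (b)
    (∀ e : ℝ, 0 < e → omg e ≠ ⊥ →
      (∃ x₀ : H, Ψ x₀ ≠ ⊤ ∧ ContinuousAt Φ x₀ ∧ Φ x₀ ≠ ⊤) →
      ∃ p : H, -omg e = FConj Ψ (e • p) + (e : EReal) * FConj Φ (-p) ∧
        ∀ q : H, FConj Ψ (e • p) + (e : EReal) * FConj Φ (-p) ≤
          FConj Ψ (e • q) + (e : EReal) * FConj Φ (-q)) ∧
    -- (c)
    ((∃ x₀ ∈ ArgMin Ψ, ContinuousAt Φ x₀ ∧ Φ x₀ ≠ ⊤) →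
      ∃ xbar ∈ ArgMinOn Φ (ArgMin Ψ), ∃ p : H,
        (∀ y ∈ ArgMin Ψ, (⟪p, y - xbar⟫ : ℝ) ≤ 0) ∧
        ∀ e : ℝ, 0 ≤ e →
          -omg e ≤ FConj Ψ (e • p) - SuppFn (ArgMin Ψ) (e • p)) := by
  have hΨb := hΨproper.1
  have hΦb := hΦproper.1
  have hC : ArgMin Ψ = {x | Ψ x ≤ ((0 : ℝ) : EReal)} := by
    rw [ArgMin_eq_setOf_le_iInf, hΨinf, EReal.coe_zero]
  obtain ⟨xS, hxSC, hxSmin⟩ := hSne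
  have hΨxS : Ψ xS = 0 :=
    le_antisymm (by simpa [hC] using hxSC) (hΨinf ▸ iInf_le Ψ xS)
  have hΦC : ∀ x ∈ ArgMin Ψ, 0 ≤ Φ x := fun x hx =>
    hΦinf ▸ iInf_le (fun y : ArgMin Ψ => Φ y) ⟨x, hx⟩
  have hΦxS : Φ xS = 0 :=
    le_antisymm (hΦinf ▸ le_iInf fun y => hxSmin y y.2) (hΦC xS hxSC)
  have weak : ∀ e : ℝ, 0 ≤ e → ∀ p : H, -omg e ≤ FConj Ψ (e • p) + e * FConj Φ (-p) :=
    fun e he p => homg e ▸ neg_iInf_add_const_mul_le hΨb hΦb he p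
  refine ⟨fun e he => le_iInf (weak e he), ?_, ?_⟩
  · rintro e he hωbot ⟨x₀, hΨx₀, hΦc, hΦx₀⟩
    obtain ⟨M, hM⟩ := exists_eventually_le_of_continuousAt hΦc hΦx₀
    have hωtop : omg e ≠ ⊤ := ne_top_of_le_ne_top EReal.zero_ne_top <|
      homg e ▸ (iInf_le _ xS).trans_eq (by rw [hΨxS, hΦxS, mul_zero, add_zero])
    obtain ⟨p, hp⟩ := exists_neg_iInf_add_const_mul_eq hΨconv hΦconv hΨb hΦb he
      (homg e ▸ hωbot) (homg e ▸ hωtop) hΨx₀ hM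
    rw [← homg] at hp
    exact ⟨p, hp, fun q => hp ▸ weak e he.le q⟩
  · rintro ⟨x₀, hx₀C, hΦc, hΦx₀⟩
    obtain ⟨M, hM⟩ := exists_eventually_le_of_continuousAt hΦc hΦx₀
    obtain ⟨p, hnormal, hp⟩ := exists_forall_inner_sub_nonpos_and_const_mul_FConj_neg_le
      (hC ▸ hΨconv.convex_sublevel 0) hΦconv hΦb hΦC hxSC hΦxS hx₀C hM
    refine ⟨xS, ⟨hxSC, hxSmin⟩, p, hnormal, fun e he => ?_⟩
    exact (weak e he p).trans ((add_le_add le_rfl (hp e he)).trans_eq (sub_eq_add_neg _ _).symm)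

/-- duality estimates for `|ω(ε)| = −ω(ε)` where
`ω(ε) = inf_H (Ψ + εΦ)`: (a) `|ω(ε)| ≤ inf_p [Ψ*(εp) + εΦ*(−p)]`; (b) equality with
attainment under the qualification condition (QC'); (c) under (QC), there exist
`x̄ ∈ S` and `p ∈ N_C(x̄)` with `|ω(ε)| ≤ Ψ*(εp) − σ_C(εp)` for all `ε ≥ 0`. -/
theorem omega_duality_estimates
    (Ψ Φ : H → EReal)
    (hΨlsc : LowerSemicontinuous Ψ) (hΨconv : EConvex Ψ)
    (hΨproper : (∀ x : H, Ψ x ≠ ⊥) ∧ ∃ x : H, Ψ x ≠ ⊤)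
    (hΨinf : (⨅ y : H, Ψ y) = (0 : EReal)) (hCne : (ArgMin Ψ).Nonempty)
    (hΦlsc : LowerSemicontinuous Φ) (hΦconv : EConvex Φ)
    (hΦproper : (∀ x : H, Φ x ≠ ⊥) ∧ ∃ x : H, Φ x ≠ ⊤)
    (hΦinf : (⨅ y : ArgMin Ψ, Φ (y : H)) = (0 : EReal))
    (hSne : (ArgMinOn Φ (ArgMin Ψ)).Nonempty)
    (omg : ℝ → EReal) (homg : ∀ e : ℝ, omg e = ⨅ y : H, (Ψ y + (e : EReal) * Φ y)) :
    -- (a)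
    (∀ e : ℝ, 0 ≤ e →
      -omg e ≤ ⨅ p : H, (FConj Ψ (e • p) + (e : EReal) * FConj Φ (-p))) ∧
    -- (b)
    (∀ e : ℝ, 0 < e → omg e ≠ ⊥ →
      (∃ x₀ : H, Ψ x₀ ≠ ⊤ ∧ ContinuousAt Φ x₀ ∧ Φ x₀ ≠ ⊤) →
      ∃ p : H, -omg e = FConj Ψ (e • p) + (e : EReal) * FConj Φ (-p) ∧
        ∀ q : H, FConj Ψ (e • p) + (e : EReal) * FConj Φ (-p) ≤
          FConj Ψ (e • q) + (e : EReal) * FConj Φ (-q)) ∧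
    -- (c)
    ((∃ x₀ ∈ ArgMin Ψ, ContinuousAt Φ x₀ ∧ Φ x₀ ≠ ⊤) →
      ∃ xbar ∈ ArgMinOn Φ (ArgMin Ψ), ∃ p : H,
        (∀ y ∈ ArgMin Ψ, (⟪p, y - xbar⟫ : ℝ) ≤ 0) ∧
        ∀ e : ℝ, 0 ≤ e →
          -omg e ≤ FConj Ψ (e • p) - SuppFn (ArgMin Ψ) (e • p)) :=
  omega_duality_estimates_general Ψ Φ hΨconv hΨproper hΨinf hΦconv hΦproper hΦinf hSne omg homg
end

section
/- Let Ψ : H → ℝ ∪ {+∞} be a closed convex function with C = argmin Ψ ≠ ∅, and let θ : ℝ → ℝ ∪ {+∞} be a closed convex even function with θ(0) = 0. Suppose that Ψ(x) ≥ θ(d(x,C)) for every x ∈ H. Then for every ε ≥ 0 and every p ∈ H, Ψ*(εp) − σ_C(εp) ≤ θ*(ε‖p‖). -/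
open MeasureTheory Set Filter Topology ENNReal RealInnerProductSpace

variable {H : Type*} [NormedAddCommGroup H] [InnerProductSpace ℝ H] [CompleteSpace H]

/-!
Let `C = argmin Ψ`, which is nonempty, closed and convex. Given `x`, let `z` be its projection on
`C` and `d = ‖x - z‖ = d(x, C)`. By Cauchy–Schwarz and `θ(d) ≤ Ψ(x)`,
`⟨q, x⟩ - Ψ(x) ≤ (‖q‖ d - θ(d)) + ⟨q, z⟩ ≤ θ*(‖q‖) + σ_C(q)`,
and taking the supremum over `x` gives `Ψ*(q) ≤ θ*(‖q‖) + σ_C(q)`; put `q = ε p`.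
-/

theorem EConvex.convex_setOf_le {E : Type*} [AddCommGroup E] [Module ℝ E] {f : E → EReal}
    (hf : EConvex f) (c : EReal) : Convex ℝ {x | f x ≤ c} := by
  intro x hx y hy a b ha hb hab
  calc f (a • x + b • y) ≤ (a : EReal) * f x + (b : EReal) * f y := hf x y a b ha hb hab
    _ ≤ (a : EReal) * c + (b : EReal) * c := by gcongr; exacts [hx, hy]
    _ = c := by
      rw [← EReal.right_distrib_of_nonneg (by exact_mod_cast ha) (by exact_mod_cast hb),
        ← EReal.coe_add, hab, EReal.coe_one, one_mul]

theorem argMin_eq_iInter_setOf_le {α : Type*} (f : α → EReal) :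
    ArgMin f = ⋂ y, {x | f x ≤ f y} := by
  ext x
  simp only [ArgMin, Set.mem_iInter, Set.mem_ofPred_eq]

theorem LowerSemicontinuous.isClosed_argMin {α : Type*} [TopologicalSpace α] {f : α → EReal}
    (hf : LowerSemicontinuous f) : IsClosed (ArgMin f) := by
  rw [argMin_eq_iInter_setOf_le]
  exact isClosed_iInter fun y => hf.isClosed_preimage (f y)

theorem EConvex.convex_argMin {E : Type*} [AddCommGroup E] [Module ℝ E] {f : E → EReal}
    (hf : EConvex f) : Convex ℝ (ArgMin f) := by
  rw [argMin_eq_iInter_setOf_le]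
  exact convex_iInter fun y => hf.convex_setOf_le (f y)

theorem exists_mem_norm_sub_eq_infDist {F : Type*} [NormedAddCommGroup F]
    [InnerProductSpace ℝ F] {K : Set F} (hne : K.Nonempty) (hK : IsComplete K)
    (hconv : Convex ℝ K) (x : F) : ∃ z ∈ K, ‖x - z‖ = Metric.infDist x K := by
  obtain ⟨z, hz, hmin⟩ := exists_norm_eq_iInf_of_complete_convex hne hK hconv x
  exact ⟨z, hz, by simp only [hmin, Metric.infDist_eq_iInf, dist_eq_norm]⟩

theorem fConj_le_iSup_add_suppFn (f : H → EReal) {C : Set H} (hne : C.Nonempty)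
    (hclosed : IsClosed C) (hconv : Convex ℝ C) (θ : ℝ → EReal)
    (hθf : ∀ x, θ (Metric.infDist x C) ≤ f x) (q : H) :
    FConj f q ≤ (⨆ t : ℝ, (((‖q‖ * t : ℝ) : EReal) - θ t)) + SuppFn C q := by
  refine iSup_le fun x => ?_
  obtain ⟨z, hz, hxz⟩ := exists_mem_norm_sub_eq_infDist hne hclosed.isComplete hconv x
  set d := ‖x - z‖
  have hinner : ⟪q, x⟫ ≤ ‖q‖ * d + ⟪q, z⟫ := by
    have := real_inner_le_norm q (x - z)
    rw [inner_sub_right] at this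
    linarith
  calc ((⟪q, x⟫ : ℝ) : EReal) - f x
      ≤ ((‖q‖ * d + ⟪q, z⟫ : ℝ) : EReal) - θ d :=
        EReal.sub_le_sub (EReal.coe_le_coe_iff.2 hinner) (hxz ▸ hθf x)
    _ = (((‖q‖ * d : ℝ) : EReal) - θ d) + ((⟪q, z⟫ : ℝ) : EReal) := by
        rw [EReal.coe_add, sub_eq_add_neg, sub_eq_add_neg, add_right_comm]
    _ ≤ (⨆ t : ℝ, (((‖q‖ * t : ℝ) : EReal) - θ t)) + SuppFn C q :=
        add_le_add (le_iSup (fun t : ℝ => ((‖q‖ * t : ℝ) : EReal) - θ t) d)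
          (le_iSup (fun w : C => ((⟪q, (w : H)⟫ : ℝ) : EReal)) ⟨z, hz⟩)

theorem conditioning_conjugate_bound_general
    (Ψ : H → EReal)
    (hΨlsc : LowerSemicontinuous Ψ) (hΨconv : EConvex Ψ)
    (hCne : (ArgMin Ψ).Nonempty)
    (θ : ℝ → EReal)
    (hmin : ∀ x : H, θ (Metric.infDist x (ArgMin Ψ)) ≤ Ψ x) :
    ∀ e : ℝ, 0 ≤ e → ∀ p : H,
      FConj Ψ (e • p) - SuppFn (ArgMin Ψ) (e • p) ≤
        ⨆ t : ℝ, (((e * ‖p‖ * t : ℝ) : EReal) - θ t) := by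
  intro e he p
  have hnorm : ‖e • p‖ = e * ‖p‖ := by rw [norm_smul, Real.norm_of_nonneg he]
  refine EReal.sub_le_of_le_add ?_
  simpa only [hnorm] using fConj_le_iSup_add_suppFn Ψ hCne hΨlsc.isClosed_argMin
    hΨconv.convex_argMin θ hmin (e • p)

/-- if `Ψ ≥ θ(d(·,C))` with `C = argmin Ψ` and `θ` a closed convex even
function with `θ(0) = 0`, then `Ψ*(εp) − σ_C(εp) ≤ θ*(ε‖p‖)` for all `ε ≥ 0`, `p ∈ H`. -/
theorem conditioning_conjugate_bound
    (Ψ : H → EReal)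
    (hΨlsc : LowerSemicontinuous Ψ) (hΨconv : EConvex Ψ)
    (hΨnobot : ∀ x : H, Ψ x ≠ ⊥)
    (hCne : (ArgMin Ψ).Nonempty)
    (θ : ℝ → EReal)
    (hθlsc : LowerSemicontinuous θ) (hθconv : EConvex θ)
    (hθnobot : ∀ t : ℝ, θ t ≠ ⊥)
    (hθeven : ∀ t : ℝ, θ (-t) = θ t) (hθzero : θ 0 = 0)
    (hmin : ∀ x : H, θ (Metric.infDist x (ArgMin Ψ)) ≤ Ψ x) :
    ∀ e : ℝ, 0 ≤ e → ∀ p : H,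
      FConj Ψ (e • p) - SuppFn (ArgMin Ψ) (e • p) ≤
        ⨆ t : ℝ, (((e * ‖p‖ * t : ℝ) : EReal) - θ t) :=
  conditioning_conjugate_bound_general Ψ hΨlsc hΨconv hCne θ hmin
end
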